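/- arXiv:2101.11233 — 2 statements merged into one kernel-verified Lean document; each statement's English description precedes it below -/
import Mathlib

section
/- Let n be a multiple of 4 and let K_n have vertex set {u_i : i ∈ I} ∪ {v_i : i ∈ I} where I = {1,...,n/2}. Define c : E(K_n) → {-1,1} by c(e) = 1 exactly when e = u_i v_j with i+j even, or e = u_i u_j with i ≠ j, and c(e) = -1 otherwise. Then c is zero-sum, and for every vertex w of K_n, the absolute value of the sum of the labels of the edges incident with w equals n/2 - 1. -/
/-! Inside its half, `u_i` meets `n/2 - 1` edges labelled `1` and `v_i` meets `n/2 - 1` edges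
labelled `-1`; across the halves, the labels `(-1)^(i+j)` seen from one vertex sum to `0` because
`n/2` is even. So the star sums are `±(n/2 - 1)`, and by the weighted handshake lemma twice the
total label is `(n/2)(n/2 - 1) + (n/2)(1 - n/2) = 0`. -/

open Finset

namespace SimpleGraph

variable {V M : Type*} [Fintype V] [DecidableEq V] [AddCommMonoid M]
  (G : SimpleGraph V) [DecidableRel G.Adj]

theorem sum_dart_edge (f : Sym2 V → M) :
    ∑ d : G.Dart, f d.edge = 2 • ∑ e ∈ G.edgeFinset, f e := by
  rw [← sum_fiberwise_of_maps_to (g := Dart.edge) (t := G.edgeFinset) (by simp), smul_sum]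
  refine sum_congr rfl fun e he => ?_
  rw [sum_congr rfl fun d hd => congrArg f (mem_filter.1 hd).2, sum_const,
    G.dart_edge_fiber_card e (mem_edgeFinset.1 he)]

theorem sum_dart_edge_eq_sum_sum_neighborFinset (f : Sym2 V → M) :
    ∑ d : G.Dart, f d.edge = ∑ v, ∑ w ∈ G.neighborFinset v, f s(v, w) := by
  rw [← sum_fiberwise (g := fun d : G.Dart => d.fst)]
  refine sum_congr rfl fun v _ => ?_
  refine sum_bij' (fun d _ => d.snd) (fun w hw => ⟨(v, w), (G.mem_neighborFinset v w).1 hw⟩)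
    ?_ ?_ ?_ ?_ ?_ <;> aesop

theorem sum_sum_neighborFinset_eq_two_nsmul_sum_edgeFinset (f : Sym2 V → M) :
    ∑ v, ∑ w ∈ G.neighborFinset v, f s(v, w) = 2 • ∑ e ∈ G.edgeFinset, f e := by
  rw [← sum_dart_edge_eq_sum_sum_neighborFinset, sum_dart_edge]

end SimpleGraph

namespace Finset

variable {α β : Type*} [Fintype α] [Fintype β] [DecidableEq α] [DecidableEq β]

theorem compl_singleton_inl (a : α) :
    ({Sum.inl a}ᶜ : Finset (α ⊕ β)) = ({a}ᶜ : Finset α).disjSum univ := by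
  ext (x | x) <;> simp

theorem compl_singleton_inr (b : β) :
    ({Sum.inr b}ᶜ : Finset (α ⊕ β)) = (univ : Finset α).disjSum {b}ᶜ := by
  ext (x | x) <;> simp

end Finset

theorem Fin.sum_ite_even_add_eq_zero {m : ℕ} (hm : Even m) (k : ℕ) :
    ∑ j : Fin m, (if Even (k + j) then (1 : ℤ) else -1) = 0 := by
  simp_rw [← neg_one_pow_eq_ite, pow_add, ← mul_sum]
  rw [Fin.sum_univ_eq_sum_range (fun j => (-1 : ℤ) ^ j), neg_one_geom_sum, if_pos hm, mul_zero]

section ParityLabeling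

variable {m : ℕ} {c : Sym2 (Fin m ⊕ Fin m) → ℤ}

theorem sum_label_compl_inl (hm : Even m)
    (huv : ∀ i j : Fin m, c s(Sum.inl i, Sum.inr j) =
      if Even (((i : ℕ) + 1) + ((j : ℕ) + 1)) then 1 else -1)
    (huu : ∀ i j : Fin m, i ≠ j → c s(Sum.inl i, Sum.inl j) = 1) (i : Fin m) :
    ∑ x ∈ {Sum.inl i}ᶜ, c s(Sum.inl i, x) = m - 1 := by
  have hcross : ∑ j, c s(Sum.inl i, Sum.inr j) = 0 := by
    simp_rw [huv, show ∀ j : ℕ, (i : ℕ) + 1 + (j + 1) = ((i : ℕ) + 2) + j from fun j => by omega]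
    exact Fin.sum_ite_even_add_eq_zero hm _
  rw [compl_singleton_inl, sum_disjSum, hcross,
    sum_congr rfl fun j hj => huu i j (Ne.symm (by simpa using hj))]
  simp [card_compl, Nat.cast_sub i.pos]

theorem sum_label_compl_inr (hm : Even m)
    (huv : ∀ i j : Fin m, c s(Sum.inl i, Sum.inr j) =
      if Even (((i : ℕ) + 1) + ((j : ℕ) + 1)) then 1 else -1)
    (hvv : ∀ i j : Fin m, i ≠ j → c s(Sum.inr i, Sum.inr j) = -1) (i : Fin m) :
    ∑ x ∈ {Sum.inr i}ᶜ, c s(Sum.inr i, x) = 1 - m := by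
  have hcross : ∑ j, c s(Sum.inr i, Sum.inl j) = 0 := by
    simp_rw [Sym2.eq_swap (a := Sum.inr i), huv,
      show ∀ j : ℕ, j + 1 + ((i : ℕ) + 1) = ((i : ℕ) + 2) + j from fun j => by omega]
    exact Fin.sum_ite_even_add_eq_zero hm _
  rw [compl_singleton_inr, sum_disjSum, hcross,
    sum_congr rfl fun j hj => hvv i j (Ne.symm (by simpa using hj))]
  simp [card_compl, Nat.cast_sub i.pos]

end ParityLabeling

theorem stmt_3_general (n : ℕ) (hn : 4 ∣ n)
    (c : Sym2 (Fin (n/2) ⊕ Fin (n/2)) → ℤ)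
    (huv : ∀ i j : Fin (n/2), c s(Sum.inl i, Sum.inr j) =
      if Even (((i : ℕ) + 1) + ((j : ℕ) + 1)) then 1 else -1)
    (huu : ∀ i j : Fin (n/2), i ≠ j → c s(Sum.inl i, Sum.inl j) = 1)
    (hvv : ∀ i j : Fin (n/2), i ≠ j → c s(Sum.inr i, Sum.inr j) = -1) :
    (∑ e ∈ (⊤ : SimpleGraph (Fin (n/2) ⊕ Fin (n/2))).edgeFinset, c e = 0) ∧
    (∀ w : Fin (n/2) ⊕ Fin (n/2),
      |∑ x ∈ Finset.univ.filter (fun x => x ≠ w), c s(w, x)| = (n : ℤ)/2 - 1) := by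
  have hm : Even (n / 2) := by
    obtain ⟨k, rfl⟩ := hn
    exact ⟨k, by omega⟩
  have star_inl := sum_label_compl_inl hm huv huu
  have star_inr := sum_label_compl_inr hm huv hvv
  simp_rw [filter_ne', ← compl_singleton]
  constructor
  · have h := (⊤ : SimpleGraph _).sum_sum_neighborFinset_eq_two_nsmul_sum_edgeFinset c
    simp only [SimpleGraph.neighborFinset_top, Fintype.sum_sum_type, star_inl, star_inr,
      sum_const, card_univ, Fintype.card_fin, nsmul_eq_mul, Nat.cast_ofNat] at h
    linarith
  · have hcast : (n : ℤ) / 2 = ((n / 2 : ℕ) : ℤ) := by omega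
    rintro (i | i) <;> have hpos := sub_nonneg.2 (Nat.one_le_cast (α := ℤ).2 i.pos)
    · rw [star_inl, hcast, abs_of_nonneg hpos]
    · rw [star_inr, hcast, abs_sub_comm, abs_of_nonneg hpos]

theorem stmt_3 (n : ℕ) (hn : 4 ∣ n) (hn0 : 0 < n)
    (c : Sym2 (Fin (n/2) ⊕ Fin (n/2)) → ℤ)
    (huv : ∀ i j : Fin (n/2), c s(Sum.inl i, Sum.inr j) =
      if Even (((i : ℕ) + 1) + ((j : ℕ) + 1)) then 1 else -1)
    (huu : ∀ i j : Fin (n/2), i ≠ j → c s(Sum.inl i, Sum.inl j) = 1)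
    (hvv : ∀ i j : Fin (n/2), i ≠ j → c s(Sum.inr i, Sum.inr j) = -1) :
    (∑ e ∈ (⊤ : SimpleGraph (Fin (n/2) ⊕ Fin (n/2))).edgeFinset, c e = 0) ∧
    (∀ w : Fin (n/2) ⊕ Fin (n/2),
      |∑ x ∈ Finset.univ.filter (fun x => x ≠ w), c s(w, x)| = (n : ℤ)/2 - 1) :=
  stmt_3_general n hn c huv huu hvv
end

section
/- If c : E(K_n) → {-1,1} is a zero-sum labeling of K_n and F is a spanning forest of K_n with Δ(F) ≥ n/2 + 1, then there is an isomorphic copy F' of F in K_n with |c(E(F'))| ≤ n/2 - 1. -/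
/-!
Call `deg_c u = ∑_{y ≠ u} c(uy)` the signed degree of `u`. Some vertex `u` has
`|deg_c u| ≤ n/2 - 1`: otherwise let `P` be the vertices of positive signed degree. As the labels
sum to zero, `∑_P deg_c = -∑_{Pᶜ} deg_c`, and twice this value is the label sum inside `P` minus the
label sum inside `Pᶜ`, because the edges between `P` and `Pᶜ` cancel. So it is at most
`|P|(|P|-1) + |Pᶜ|(|Pᶜ|-1)`, yet at least `(n-1) max(|P|, |Pᶜ|)`, which is impossible.

Each sign occurs on at least `n/4` edges at such a `u`. Map a vertex `v` of maximum degree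
`d ≥ n/2 + 1` of the forest to `u`, and its neighbours onto a set `X` of `d` neighbours of `u` with
`|c(u, X)| ≤ d - n/2`. The other edges of the forest, at most `n - 1 - d` of them, contribute at
most one each.
-/

open Finset
open scoped Classical

lemma Finset.abs_sum_le_card {ι : Type*} (s : Finset ι) (f : ι → ℤ) (hf : ∀ i ∈ s, |f i| ≤ 1) :
    |∑ i ∈ s, f i| ≤ #s := by
  simpa using (abs_sum_le_sum_abs f s).trans (sum_le_card_nsmul s _ 1 hf)

lemma Finset.exists_subset_card_eq_two_mul_abs_sum_le {α : Type*} [DecidableEq α] (S : Finset α)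
    (f : α → ℤ) (hf : ∀ x ∈ S, f x = 1 ∨ f x = -1) (hS : 2 * |∑ x ∈ S, f x| < #S) {d : ℕ}
    (hd : #S + 3 ≤ 2 * d) (hdS : d ≤ #S) :
    ∃ X ⊆ S, #X = d ∧ 2 * |∑ x ∈ X, f x| + #S + 1 ≤ 2 * d := by
  set pos := S.filter (f · = 1)
  set neg := S.filter (f · ≠ 1)
  have hneg : ∀ x ∈ neg, f x = -1 := fun x hx => by
    obtain ⟨hxS, hx⟩ := mem_filter.mp hx
    exact (hf x hxS).resolve_left hx
  have hcard : #pos + #neg = #S := card_filter_add_card_filter_not _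
  have hsum : ∑ x ∈ S, f x = #pos - #neg := by
    rw [← sum_filter_add_sum_filter_not S (f · = 1), sum_congr rfl fun x hx => (mem_filter.mp hx).2,
      sum_congr rfl hneg]
    simp [pos, neg, sub_eq_add_neg]
  -- take `a` entries `+1` and `d - a` entries `-1`, with `a` least such that `4 * a > #S` and
  -- `d - a ≤ #neg`
  set a := max (d - #neg) ((#S + 4) / 4)
  have hbal := abs_lt.mp (show |2 * ((#pos : ℤ) - #neg)| < #S by rwa [abs_mul, abs_two, ← hsum])
  obtain ⟨Xp, hXp, hXpa⟩ := exists_subset_card_eq (s := pos) (n := a) (by omega)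
  obtain ⟨Xn, hXn, hXnb⟩ := exists_subset_card_eq (s := neg) (n := d - a) (by omega)
  have hdisj : Disjoint Xp Xn := (disjoint_filter_filter_not S S _).mono hXp hXn
  refine ⟨Xp ∪ Xn, union_subset (hXp.trans (filter_subset _ _)) (hXn.trans (filter_subset _ _)),
    by rw [card_union_of_disjoint hdisj]; omega, ?_⟩
  have hXsum : ∑ x ∈ Xp ∪ Xn, f x = (a : ℤ) - (d - a : ℕ) := by
    rw [sum_union hdisj, sum_congr rfl fun x hx => (mem_filter.mp (hXp hx)).2,
      sum_congr rfl fun x hx => hneg x (hXn hx)]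
    simp [hXpa, hXnb, sub_eq_add_neg]
  suffices |2 * ((a : ℤ) - (d - a : ℕ))| ≤ 2 * d - #S - 1 by
    rw [abs_mul, abs_two] at this
    rw [hXsum]
    omega
  exact abs_le.mpr ⟨by omega, by omega⟩

namespace Equiv.Perm

lemma exists_apply_eq_and_map_finset_eq {α : Type*} [DecidableEq α] {s t : Finset α} {a b : α}
    (ha : a ∉ s) (hb : b ∉ t) (h : #s = #t) :
    ∃ τ : Perm α, τ a = b ∧ s.map τ.toEmbedding = t := by
  obtain ⟨σ, rfl⟩ := exists_map_finset_eq s t h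
  refine ⟨σ.trans (swap (σ a) b), by simp, ?_⟩
  simp only [map_eq_image]
  refine image_congr fun x hx => ?_
  have hxa : σ x ≠ σ a := σ.injective.ne fun h => ha (h ▸ hx)
  have hxb : σ x ≠ b := fun h => hb (h ▸ mem_map_of_mem _ hx)
  simp [swap_apply_of_ne_of_ne hxa hxb]

end Equiv.Perm

namespace SimpleGraph

variable {V : Type*} [Fintype V]

lemma IsAcyclic.card_edgeFinset_lt [Nonempty V] {G : SimpleGraph V} [Fintype G.edgeSet]
    (hG : G.IsAcyclic) : #G.edgeFinset < Fintype.card V := by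
  obtain ⟨T, hGT, -, hT⟩ := connected_top.exists_isTree_le_of_le_of_isAcyclic le_top hG
  have := hT.card_edgeFinset
  have := card_le_card (edgeFinset_mono hGT)
  omega

variable (G : SimpleGraph V) [DecidableRel G.Adj]

lemma incidenceFinset_eq_image [DecidableEq V] (v : V) :
    G.incidenceFinset v = (G.neighborFinset v).image (s(v, ·)) := by
  ext e
  induction e with
  | _ x y =>
    simp only [mem_incidenceFinset, incidenceSet, Set.mem_ofPred_eq, mem_edgeSet, Sym2.mem_iff,
      mem_image, mem_neighborFinset, Sym2.eq_iff]
    constructor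
    · rintro ⟨h, rfl | rfl⟩
      exacts [⟨y, h, .inl ⟨rfl, rfl⟩⟩, ⟨x, h.symm, .inr ⟨rfl, rfl⟩⟩]
    · rintro ⟨w, h, ⟨rfl, rfl⟩ | ⟨rfl, rfl⟩⟩
      exacts [⟨h, .inl rfl⟩, ⟨h.symm, .inr rfl⟩]

lemma sum_sum_neighborFinset_eq_two_nsmul {M : Type*} [AddCommMonoid M] (g : Sym2 V → M) :
    ∑ v, ∑ w ∈ G.neighborFinset v, g s(v, w) = 2 • ∑ e ∈ G.edgeFinset, g e := by
  have hfst (v : V) :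
      ∑ w ∈ G.neighborFinset v, g s(v, w) = ∑ d : G.Dart with d.fst = v, g d.edge := by
    refine (sum_bij (fun d _ => d.snd) ?_ ?_ ?_ ?_).symm
    · intro d hd
      simp only [mem_filter_univ] at hd
      simp [← hd, d.adj]
    · intro d₁ h₁ d₂ h₂ h
      simp only [mem_filter_univ] at h₁ h₂
      exact Dart.ext _ _ (Prod.ext (h₁.trans h₂.symm) h)
    · intro w hw
      exact ⟨⟨(v, w), (mem_neighborFinset _ _ _).mp hw⟩, by simp, rfl⟩
    · intro d hd
      simp only [mem_filter_univ] at hd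
      simp [Dart.edge, ← hd]
  calc ∑ v, ∑ w ∈ G.neighborFinset v, g s(v, w)
      = ∑ v, ∑ d : G.Dart with d.fst = v, g d.edge := Fintype.sum_congr _ _ hfst
    _ = ∑ d : G.Dart, g d.edge := by exact sum_fiberwise univ (fun d : G.Dart => d.fst) _
    _ = ∑ e ∈ G.edgeFinset, ∑ d : G.Dart with d.edge = e, g d.edge :=
      (sum_fiberwise_of_maps_to (by simp) _).symm
    _ = 2 • ∑ e ∈ G.edgeFinset, g e := by
      rw [smul_sum]
      refine sum_congr rfl fun e he => ?_
      rw [sum_congr rfl fun d hd => congrArg g (mem_filter.mp hd).2, sum_const,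
        G.dart_edge_fiber_card e (mem_edgeFinset.mp he)]

lemma abs_sum_edgeFinset_sub_sum_neighborFinset_le [DecidableEq V] {c : Sym2 V → ℤ}
    (hc : ∀ e ∈ (⊤ : SimpleGraph V).edgeSet, |c e| ≤ 1) (τ : Equiv.Perm V) (v : V) :
    |∑ e ∈ G.edgeFinset, c (e.map τ) - ∑ w ∈ G.neighborFinset v, c s(τ v, τ w)|
      ≤ #G.edgeFinset - G.degree v := by
  have hinc : G.incidenceFinset v ⊆ G.edgeFinset := G.incidenceFinset_subset v
  have hstar :
      ∑ e ∈ G.incidenceFinset v, c (e.map τ) = ∑ w ∈ G.neighborFinset v, c s(τ v, τ w) := by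
    rw [incidenceFinset_eq_image, sum_image fun _ _ _ _ h => Sym2.congr_right.mp h]
    rfl
  rw [← sum_sdiff hinc, hstar, add_sub_cancel_right, ← card_incidenceFinset_eq_degree,
    ← Nat.cast_sub (card_le_card hinc), ← card_sdiff_of_subset hinc]
  refine abs_sum_le_card _ _ fun e he => hc _ ?_
  induction e with
  | _ x y =>
    have hxy : G.Adj x y := mem_edgeFinset.mp (mem_sdiff.mp he).1
    simpa using hxy.ne

end SimpleGraph

section SignedDegree

variable {V : Type*} [DecidableEq V]

lemma abs_sum_sum_erase_le {c : Sym2 V → ℤ} (hc : ∀ e ∈ (⊤ : SimpleGraph V).edgeSet, |c e| ≤ 1)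
    (S : Finset V) : |∑ u ∈ S, ∑ y ∈ S.erase u, c s(u, y)| ≤ #S * (#S - 1) := by
  calc _ ≤ ∑ u ∈ S, |∑ y ∈ S.erase u, c s(u, y)| := abs_sum_le_sum_abs _ _
    _ ≤ ∑ u ∈ S, ((#S : ℤ) - 1) := sum_le_sum fun u hu => by
      refine (abs_sum_le_card _ _ fun y hy => hc _ (ne_of_mem_erase hy).symm).trans ?_
      have := card_pos.mpr ⟨u, hu⟩
      rw [card_erase_of_mem hu]
      omega
    _ = #S * (#S - 1) := by rw [sum_const, nsmul_eq_mul]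

variable [Fintype V]

def signedDegree (c : Sym2 V → ℤ) (u : V) : ℤ := ∑ y ∈ univ.erase u, c s(u, y)

lemma sum_signedDegree (c : Sym2 V → ℤ) :
    ∑ u, signedDegree c u = 2 * ∑ e ∈ (⊤ : SimpleGraph V).edgeFinset, c e := by
  simpa [signedDegree, compl_singleton] using
    (⊤ : SimpleGraph V).sum_sum_neighborFinset_eq_two_nsmul c

lemma sum_signedDegree_eq_sum_erase_add_sum_compl (c : Sym2 V → ℤ) (S : Finset V) :
    ∑ u ∈ S, signedDegree c u =
      ∑ u ∈ S, ∑ y ∈ S.erase u, c s(u, y) + ∑ u ∈ S, ∑ y ∈ Sᶜ, c s(u, y) := by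
  rw [← sum_add_distrib]
  refine sum_congr rfl fun u hu => ?_
  have := add_sum_erase univ (c s(u, ·)) (mem_univ u)
  have := add_sum_erase S (c s(u, ·)) hu
  have := sum_add_sum_compl S (c s(u, ·))
  simp only [signedDegree]
  linarith

lemma two_mul_sum_signedDegree_le {c : Sym2 V → ℤ}
    (hc : ∀ e ∈ (⊤ : SimpleGraph V).edgeSet, |c e| ≤ 1)
    (hzero : ∑ e ∈ (⊤ : SimpleGraph V).edgeFinset, c e = 0) (S : Finset V) :
    2 * ∑ u ∈ S, signedDegree c u ≤ #S * (#S - 1) + #Sᶜ * (#Sᶜ - 1) := by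
  have htot : ∑ u ∈ S, signedDegree c u + ∑ u ∈ Sᶜ, signedDegree c u = 0 := by
    rw [sum_add_sum_compl, sum_signedDegree, hzero, mul_zero]
  have hcross : ∑ u ∈ Sᶜ, ∑ y ∈ Sᶜᶜ, c s(u, y) = ∑ u ∈ S, ∑ y ∈ Sᶜ, c s(u, y) := by
    rw [compl_compl, sum_comm]
    simp_rw [Sym2.eq_swap]
  have := sum_signedDegree_eq_sum_erase_add_sum_compl c S
  have := sum_signedDegree_eq_sum_erase_add_sum_compl c Sᶜ
  have := le_abs_self (∑ u ∈ S, ∑ y ∈ S.erase u, c s(u, y))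
  have := neg_le_abs (∑ u ∈ Sᶜ, ∑ y ∈ Sᶜ.erase u, c s(u, y))
  have := abs_sum_sum_erase_le hc S
  have := abs_sum_sum_erase_le hc Sᶜ
  linarith

lemma exists_two_mul_abs_signedDegree_add_two_le {c : Sym2 V → ℤ} (hn : 2 ≤ Fintype.card V)
    (hc : ∀ e ∈ (⊤ : SimpleGraph V).edgeSet, |c e| ≤ 1)
    (hzero : ∑ e ∈ (⊤ : SimpleGraph V).edgeFinset, c e = 0) :
    ∃ u, 2 * |signedDegree c u| + 2 ≤ Fintype.card V := by
  by_contra! hfar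
  set n := Fintype.card V
  set P := univ.filter (0 < signedDegree c ·)
  set T := ∑ u ∈ P, signedDegree c u
  have hcard : #P + #Pᶜ = n := card_add_card_compl P
  have htot : T + ∑ u ∈ Pᶜ, signedDegree c u = 0 := by
    rw [sum_add_sum_compl, sum_signedDegree, hzero, mul_zero]
  have hP : #P * ((n : ℤ) - 1) ≤ 2 * T := by
    rw [mul_sum]
    refine (card_nsmul_le_sum _ _ _ fun u hu => ?_).trans_eq' (nsmul_eq_mul _ _).symm
    have := hfar u
    rw [abs_of_pos (mem_filter.mp hu).2] at this
    omega
  have hPc : 2 * ∑ u ∈ Pᶜ, signedDegree c u ≤ #Pᶜ * (1 - (n : ℤ)) := by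
    rw [mul_sum]
    refine (sum_le_card_nsmul _ _ _ fun u hu => ?_).trans_eq (nsmul_eq_mul _ _)
    have := hfar u
    rw [abs_of_nonpos (not_lt.mp (by simpa [P] using hu))] at this
    omega
  have hT := two_mul_sum_signedDegree_le hc hzero P
  have hsplit : T = 0 ∨ (P.Nonempty ∧ Pᶜ.Nonempty) := by
    rcases P.eq_empty_or_nonempty with h | h
    · simp [T, h]
    rcases Pᶜ.eq_empty_or_nonempty with h' | h'
    · simpa [h'] using htot
    exact .inr ⟨h, h'⟩
  rcases hsplit with h | ⟨h, h'⟩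
  · nlinarith
  · have := card_pos.mpr h
    have := card_pos.mpr h'
    rcases le_total #P #Pᶜ with hle | hle <;> nlinarith

end SignedDegree

lemma SimpleGraph.IsAcyclic.exists_perm_two_mul_abs_sum_edgeFinset_add_two_le {V : Type*}
    [Fintype V] [DecidableEq V] {c : Sym2 V → ℤ}
    (hc : ∀ e ∈ (⊤ : SimpleGraph V).edgeSet, c e = 1 ∨ c e = -1)
    (hzero : ∑ e ∈ (⊤ : SimpleGraph V).edgeFinset, c e = 0) {F : SimpleGraph V}
    [DecidableRel F.Adj] (hF : F.IsAcyclic) {v : V} (hv : Fintype.card V + 2 ≤ 2 * F.degree v) :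
    ∃ τ : Equiv.Perm V, 2 * |∑ e ∈ F.edgeFinset, c (e.map τ)| + 2 ≤ Fintype.card V := by
  have hc₁ : ∀ e ∈ (⊤ : SimpleGraph V).edgeSet, |c e| ≤ 1 := fun e he => by
    rcases hc e he with h | h <;> simp [h]
  have : Nonempty V := ⟨v⟩
  have hdn := F.degree_lt_card_verts v
  have hE := hF.card_edgeFinset_lt
  have hdE := F.degree_le_card_edgeFinset v
  obtain ⟨u, hu⟩ := exists_two_mul_abs_signedDegree_add_two_le (by omega) hc₁ hzero
  have hcard : #(univ.erase u) + 1 = Fintype.card V := card_erase_add_one (mem_univ u)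
  obtain ⟨X, hXu, hXcard, hX⟩ := (univ.erase u).exists_subset_card_eq_two_mul_abs_sum_le
    (c s(u, ·)) (fun y hy => hc _ (ne_of_mem_erase hy).symm) (by unfold signedDegree at hu; omega)
    (d := F.degree v) (by omega) (by omega)
  obtain ⟨τ, hτv, hτN⟩ := Equiv.Perm.exists_apply_eq_and_map_finset_eq
    (F.notMem_neighborFinset_self v) (fun h => (mem_erase.mp (hXu h)).1 rfl)
    (by rw [card_neighborFinset_eq_degree, hXcard])
  have hstar : ∑ w ∈ F.neighborFinset v, c s(τ v, τ w) = ∑ x ∈ X, c s(u, x) := by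
    rw [← hτN, sum_map, hτv]
    rfl
  have := (abs_sub_abs_le_abs_sub _ _).trans
    (hstar ▸ F.abs_sum_edgeFinset_sub_sum_neighborFinset_le hc₁ τ v)
  exact ⟨τ, by omega⟩

theorem stmt_9 (n : ℕ) (c : Sym2 (Fin n) → ℤ)
    (hc : ∀ e ∈ (⊤ : SimpleGraph (Fin n)).edgeSet, c e = 1 ∨ c e = -1)
    (hzero : ∑ e ∈ Finset.univ.filter (fun e => e ∈ (⊤ : SimpleGraph (Fin n)).edgeSet), c e = 0)
    (F : SimpleGraph (Fin n)) [DecidableRel F.Adj] (hF : F.IsAcyclic)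
    (hΔ : (F.maxDegree : ℝ) ≥ (n : ℝ)/2 + 1) :
    ∃ F' : SimpleGraph (Fin n), Nonempty (F ≃g F') ∧
      (|∑ e ∈ Finset.univ.filter (fun e => e ∈ F'.edgeSet), c e| : ℝ) ≤ (n : ℝ)/2 - 1 := by
  have : Nonempty (Fin n) := by
    refine Fin.pos_iff_nonempty.mp (Nat.pos_of_ne_zero ?_)
    rintro rfl
    simp at hΔ
    linarith
  obtain ⟨v, hv⟩ := F.exists_maximal_degree_vertex
  have hd : Fintype.card (Fin n) + 2 ≤ 2 * F.degree v := by
    have : ((n + 2 : ℕ) : ℝ) ≤ 2 * F.maxDegree := by push_cast; linarith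
    simpa [← hv] using (by exact_mod_cast this : n + 2 ≤ 2 * F.maxDegree)
  obtain ⟨τ, hτ⟩ := hF.exists_perm_two_mul_abs_sum_edgeFinset_add_two_le hc
    (by rwa [SimpleGraph.edgeFinset, ← Set.filter_mem_univ_eq_toFinset]) hd
  refine ⟨F.map τ.toEmbedding, ⟨SimpleGraph.Iso.map τ F⟩, ?_⟩
  have := (Int.cast_le (R := ℝ)).mpr hτ
  push_cast [Fintype.card_fin] at this
  calc |∑ e ∈ _, (c e : ℝ)| = |∑ e ∈ F.edgeFinset, (c (e.map τ) : ℝ)| := by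
        congr 1
        convert sum_map F.edgeFinset τ.toEmbedding.sym2Map fun e => (c e : ℝ) using 2
        · ext e
          simp only [mem_filter, mem_univ, true_and, SimpleGraph.edgeSet_map, mem_map,
            SimpleGraph.mem_edgeFinset, Set.mem_image]
        · rfl
    _ ≤ n / 2 - 1 := by linarith
end
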